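/- In a strongly connected finite automaton A over 2^Σ, for any states p, q, the number of n-letter squeezed words from p to q and the number of n-letter squeezed words in the full language differ by at most a constant multiplicative factor: #𝒮_{n−2} L_full ≤ #𝒮ₙ (ᵖqL) ≤ #𝒮ₙ L_full and #𝒮ₙ L_full ≤ 2^{2·#Σ} · #𝒮_{n−2} L_full. -/

import Mathlib

/-!
Strong connectivity gives, between any two states, a run that uses every transition label, so
that squeezing it into one letter yields the union `U` of all labels. Wrapping a run of the full
automaton between two such runs shows that `W ↦ U·W·U` injects `𝒮_{n-2} L_full` into `𝒮ₙ(ᵖqL)`.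
Conversely, `L_full` is closed under taking factors, so removing the first and last letter of a
word of `𝒮ₙ L_full` gives a word of `𝒮_{n-2} L_full`, and each end letter is one of `2^{#Σ}` sets.
-/

/-- The squeezing of a language over the powerset alphabet. -/
def squeezeLang {σ : Type*} (L : Language (Set σ)) : Language (Set σ) :=
  {w | ∃ Ws : List (List (Set σ)), Ws.flatten ∈ L ∧
        w = Ws.map (fun f => f.foldr (· ∪ ·) ∅)}

/-- The language of an NFA where all states are both initial and final. -/
def fullLang {σ Q : Type*} (A : NFA (Set σ) Q) : Language (Set σ) :=
  {w | ∃ p q : Q, q ∈ A.evalFrom {p} w}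

/-- The language of an NFA with single initial state `p` and single final state `q`. -/
def pqLang {σ Q : Type*} (A : NFA (Set σ) Q) (p q : Q) : Language (Set σ) :=
  {w | q ∈ A.evalFrom {p} w}

/-- Number of `n`-letter words of the squeezed language `𝒮 L`. -/
noncomputable def sCount {σ : Type*} (L : Language (Set σ)) (n : ℕ) : ℕ :=
  {w : List (Set σ) | w ∈ squeezeLang L ∧ w.length = n}.ncard

namespace NFA

variable {α Q : Type*} (A : NFA α Q)

def IsStronglyConnected : Prop :=
  ∀ p q : Q, ∃ w : List α, q ∈ A.evalFrom {p} w

def labels : Set α :=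
  {a | ∃ s t, t ∈ A.step s a}

variable {A}

theorem mem_evalFrom_singleton_append {p r : Q} {u v : List α} :
    r ∈ A.evalFrom {p} (u ++ v) ↔ ∃ s ∈ A.evalFrom {p} u, r ∈ A.evalFrom {s} v := by
  rw [evalFrom_append, mem_evalFrom_iff_exists]

theorem mem_labels_of_mem_evalFrom {S : Set Q} {r : Q} {w : List α} {a : α}
    (hr : r ∈ A.evalFrom S w) (ha : a ∈ w) : a ∈ A.labels := by
  obtain ⟨u, v, rfl⟩ := List.append_of_mem ha
  rw [evalFrom_append, evalFrom_cons, mem_evalFrom_iff_exists] at hr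
  obtain ⟨t, ht, -⟩ := hr
  obtain ⟨s, -, hst⟩ := mem_stepSet.1 ht
  exact ⟨s, t, hst⟩

theorem IsStronglyConnected.exists_mem_evalFrom_subset (h : A.IsStronglyConnected)
    {l : List α} (hl : ∀ a ∈ l, a ∈ A.labels) (p q : Q) :
    ∃ w, q ∈ A.evalFrom {p} w ∧ l ⊆ w := by
  induction l generalizing p with
  | nil =>
    obtain ⟨w, hw⟩ := h p q
    exact ⟨w, hw, List.nil_subset w⟩
  | cons a l ih =>
    obtain ⟨s, t, hst⟩ := hl a List.mem_cons_self
    obtain ⟨u, hu⟩ := h p s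
    obtain ⟨v, hv, hlv⟩ := ih (fun b hb => hl b (List.mem_cons_of_mem a hb)) t
    refine ⟨u ++ a :: v, ?_, List.cons_subset.2 ⟨by simp, fun b hb => by simp [hlv hb]⟩⟩
    rw [← List.singleton_append, ← List.append_assoc, mem_evalFrom_singleton_append]
    exact ⟨t, mem_evalFrom_singleton_append.2 ⟨s, hu, by simpa using hst⟩, hv⟩

theorem IsStronglyConnected.exists_mem_evalFrom_mem_iff [Finite α] (h : A.IsStronglyConnected)
    (p q : Q) : ∃ w, q ∈ A.evalFrom {p} w ∧ ∀ a, a ∈ w ↔ a ∈ A.labels := by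
  obtain ⟨w, hw, hsub⟩ := h.exists_mem_evalFrom_subset
    (l := (Set.toFinite A.labels).toFinset.toList) (by simp) p q
  exact ⟨w, hw, fun a => ⟨mem_labels_of_mem_evalFrom hw, fun ha => hsub (by simpa using ha)⟩⟩

end NFA

section Squeeze

variable {σ : Type*}

theorem List.foldr_union_eq_biUnion (w : List (Set σ)) :
    w.foldr (· ∪ ·) ∅ = ⋃ B ∈ w, B := by
  induction w with
  | nil => simp
  | cons B w ih => simp [ih]

theorem NFA.IsStronglyConnected.exists_mem_evalFrom_foldr_union_eq [Finite σ] {Q : Type*}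
    {A : NFA (Set σ) Q} (h : A.IsStronglyConnected) (p q : Q) :
    ∃ w, q ∈ A.evalFrom {p} w ∧ w.foldr (· ∪ ·) ∅ = ⋃₀ A.labels := by
  obtain ⟨w, hw, hlabels⟩ := h.exists_mem_evalFrom_mem_iff p q
  exact ⟨w, hw, by simp [List.foldr_union_eq_biUnion, Set.sUnion_eq_biUnion, ← hlabels]⟩

theorem squeezeLang_mono {L M : Language (Set σ)} (h : L ≤ M) : squeezeLang L ≤ squeezeLang M :=
  fun _ ⟨Ws, hWs, hw⟩ => ⟨Ws, h hWs, hw⟩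

theorem finite_setOf_mem_squeezeLang_length_eq [Finite σ] (L : Language (Set σ)) (n : ℕ) :
    {w : List (Set σ) | w ∈ squeezeLang L ∧ w.length = n}.Finite :=
  (List.finite_length_eq _ n).subset fun _ hw => hw.2

theorem sCount_mono [Finite σ] {L M : Language (Set σ)} (h : L ≤ M) (n : ℕ) :
    sCount L n ≤ sCount M n :=
  Set.ncard_le_ncard (fun _ ⟨hw, hn⟩ => ⟨squeezeLang_mono h hw, hn⟩)
    (finite_setOf_mem_squeezeLang_length_eq M n)

theorem cons_append_mem_squeezeLang {L M : Language (Set σ)} {U₁ U₂ : Set σ}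
    (h : ∀ x ∈ L, ∃ u v : List (Set σ),
      u.foldr (· ∪ ·) ∅ = U₁ ∧ v.foldr (· ∪ ·) ∅ = U₂ ∧ u ++ x ++ v ∈ M)
    {W : List (Set σ)} (hW : W ∈ squeezeLang L) : U₁ :: (W ++ [U₂]) ∈ squeezeLang M := by
  obtain ⟨Ws, hWs, rfl⟩ := hW
  obtain ⟨u, v, rfl, rfl, huv⟩ := h _ hWs
  exact ⟨u :: (Ws ++ [v]), by simpa using huv, by simp⟩

theorem sCount_le_sCount_add_two [Finite σ] {L M : Language (Set σ)} {U₁ U₂ : Set σ}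
    (h : ∀ x ∈ L, ∃ u v : List (Set σ),
      u.foldr (· ∪ ·) ∅ = U₁ ∧ v.foldr (· ∪ ·) ∅ = U₂ ∧ u ++ x ++ v ∈ M) (n : ℕ) :
    sCount L n ≤ sCount M (n + 2) := by
  have hinj : Function.Injective fun W : List (Set σ) => U₁ :: (W ++ [U₂]) :=
    fun W₁ W₂ hW => List.append_cancel_right (List.cons.inj hW).2
  rw [sCount, ← hinj.injOn.ncard_image]
  refine Set.ncard_le_ncard ?_ (finite_setOf_mem_squeezeLang_length_eq M (n + 2))
  rintro _ ⟨W, ⟨hW, rfl⟩, rfl⟩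
  exact ⟨cons_append_mem_squeezeLang h hW, by simp⟩

theorem mem_squeezeLang_of_cons_append {L : Language (Set σ)}
    (hL : ∀ x ∈ L, ∀ v, v <:+: x → v ∈ L) {B₁ B₂ : Set σ} {W : List (Set σ)}
    (h : B₁ :: (W ++ [B₂]) ∈ squeezeLang L) : W ∈ squeezeLang L := by
  obtain ⟨Ws, hWs, hw⟩ := h
  obtain ⟨u, Vs, rfl, -, hVs⟩ := List.map_eq_cons_iff.1 hw.symm
  obtain ⟨Ms, v, rfl, rfl, -⟩ := List.map_eq_append_iff.1 hVs
  exact ⟨Ms, hL _ hWs _ ⟨u, v.flatten, by simp⟩, rfl⟩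

theorem sCount_add_two_le [Fintype σ] {L : Language (Set σ)}
    (hL : ∀ x ∈ L, ∀ v, v <:+: x → v ∈ L) (n : ℕ) :
    sCount L (n + 2) ≤ 2 ^ (2 * Fintype.card σ) * sCount L n := by
  set S := {w : List (Set σ) | w ∈ squeezeLang L ∧ w.length = n}
  have hcover : {w : List (Set σ) | w ∈ squeezeLang L ∧ w.length = n + 2} ⊆
      (fun x : Set σ × List (Set σ) × Set σ => x.1 :: (x.2.1 ++ [x.2.2])) ''
        (Set.univ ×ˢ S ×ˢ Set.univ) := by
    rintro w ⟨hw, hlen⟩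
    obtain ⟨B₁, w', rfl⟩ := List.exists_cons_of_length_eq_add_one hlen
    obtain ⟨W, B₂, rfl⟩ : ∃ W B₂, w' = W ++ [B₂] :=
      w'.eq_nil_or_concat'.resolve_left (by rintro rfl; simp at hlen)
    exact ⟨(B₁, W, B₂), ⟨trivial, ⟨mem_squeezeLang_of_cons_append hL hw, by simpa using hlen⟩,
      trivial⟩, rfl⟩
  have hfin : (Set.univ ×ˢ S ×ˢ Set.univ : Set (Set σ × List (Set σ) × Set σ)).Finite :=
    Set.finite_univ.prod ((finite_setOf_mem_squeezeLang_length_eq L n).prod Set.finite_univ)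
  calc sCount L (n + 2) ≤ (Set.univ ×ˢ S ×ˢ Set.univ : Set (Set σ × List (Set σ) × Set σ)).ncard :=
        (Set.ncard_le_ncard hcover (hfin.image _)).trans (Set.ncard_image_le hfin)
    _ = 2 ^ (2 * Fintype.card σ) * S.ncard := by
        simp only [Set.ncard_prod, Set.ncard_univ, Nat.card_eq_fintype_card, Fintype.card_set]
        ring

end Squeeze

section Automaton

variable {σ Q : Type*}

theorem pqLang_le_fullLang (A : NFA (Set σ) Q) (p q : Q) : pqLang A p q ≤ fullLang A :=
  fun _ hw => ⟨p, q, hw⟩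

theorem mem_fullLang_of_isInfix {A : NFA (Set σ) Q} {x v : List (Set σ)} (hx : x ∈ fullLang A)
    (hv : v <:+: x) : v ∈ fullLang A := by
  obtain ⟨p, q, hpq⟩ := hx
  obtain ⟨u, w, rfl⟩ := hv
  obtain ⟨s, hs, -⟩ := NFA.mem_evalFrom_singleton_append.1 hpq
  obtain ⟨r, -, hrs⟩ := NFA.mem_evalFrom_singleton_append.1 hs
  exact ⟨r, s, hrs⟩

theorem NFA.IsStronglyConnected.exists_append_mem_pqLang [Finite σ] {A : NFA (Set σ) Q}
    (h : A.IsStronglyConnected) (p q : Q) {x : List (Set σ)} (hx : x ∈ fullLang A) :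
    ∃ u v : List (Set σ), u.foldr (· ∪ ·) ∅ = ⋃₀ A.labels ∧
      v.foldr (· ∪ ·) ∅ = ⋃₀ A.labels ∧ u ++ x ++ v ∈ pqLang A p q := by
  obtain ⟨p', q', hx⟩ := hx
  obtain ⟨u, hu, hU⟩ := h.exists_mem_evalFrom_foldr_union_eq p p'
  obtain ⟨v, hv, hV⟩ := h.exists_mem_evalFrom_foldr_union_eq q' q
  exact ⟨u, v, hU, hV, NFA.mem_evalFrom_singleton_append.2
    ⟨q', NFA.mem_evalFrom_singleton_append.2 ⟨p', hu, hx⟩, hv⟩⟩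

end Automaton

theorem squeeze_pq_vs_full_general {σ Q : Type*} [Fintype σ]
    (A : NFA (Set σ) Q)
    (hconn : ∀ p q : Q, ∃ w : List (Set σ), q ∈ A.evalFrom {p} w)
    (p q : Q) (n : ℕ) (hn : 2 ≤ n) :
    sCount (fullLang A) (n - 2) ≤ sCount (pqLang A p q) n ∧
    sCount (pqLang A p q) n ≤ sCount (fullLang A) n ∧
    sCount (fullLang A) n ≤ 2 ^ (2 * Fintype.card σ) * sCount (fullLang A) (n - 2) := by
  obtain ⟨m, rfl⟩ := Nat.exists_eq_add_of_le' hn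
  have hA : A.IsStronglyConnected := hconn
  rw [Nat.add_sub_cancel]
  exact ⟨sCount_le_sCount_add_two (fun _ hx => hA.exists_append_mem_pqLang p q hx) m,
    sCount_mono (pqLang_le_fullLang A p q) _,
    sCount_add_two_le (fun _ hx _ hv => mem_fullLang_of_isInfix hx hv) m⟩

/-- In a strongly connected finite automaton, counts of squeezed words from `p` to `q`
and of the full language differ only by a constant multiplicative factor:
`#𝒮_{n−2}L_full ≤ #𝒮ₙ(ᵖqL) ≤ #𝒮ₙL_full` and `#𝒮ₙL_full ≤ 2^{2·#Σ}·#𝒮_{n−2}L_full`. -/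
theorem squeeze_pq_vs_full {σ Q : Type*} [Fintype σ] [Fintype Q]
    (A : NFA (Set σ) Q)
    (hconn : ∀ p q : Q, ∃ w : List (Set σ), q ∈ A.evalFrom {p} w)
    (htrans : ∃ (p : Q) (B : Set σ) (q : Q), q ∈ A.step p B)
    (p q : Q) (n : ℕ) (hn : 2 ≤ n) :
    sCount (fullLang A) (n - 2) ≤ sCount (pqLang A p q) n ∧
    sCount (pqLang A p q) n ≤ sCount (fullLang A) n ∧
    sCount (fullLang A) n ≤ 2 ^ (2 * Fintype.card σ) * sCount (fullLang A) (n - 2) :=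
  squeeze_pq_vs_full_general A hconn p q n hn
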